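/- For any finite path (s_1, w_1, …, s_n, w_n) in a graph product G(Γ), where each s_k lies in some vertex group minus the identity and each w_k ∈ G ∖ {e}, the syllable length of Z_n = s_1w_1⋯s_nw_n is at least the number #P_n of pivotal times of the path. -/

import Mathlib

open MeasureTheory ProbabilityTheory
open scoped Classical ENNReal

namespace GraphProductDrift

variable {D : ℕ}

/-- The commutation relators of a graph product. -/
def Rels (Γ : SimpleGraph (Fin D)) (G : Fin D → Type*) [∀ i, Group (G i)] :
    Set (Monoid.CoprodI G) :=
  { x | ∃ (i j : Fin D) (g : G i) (h : G j), Γ.Adj i j ∧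
      x = Monoid.CoprodI.of g * Monoid.CoprodI.of h *
        (Monoid.CoprodI.of g)⁻¹ * (Monoid.CoprodI.of h)⁻¹ }

/-- The graph product of the family of groups `G` over the graph `Γ`. -/
abbrev GP (Γ : SimpleGraph (Fin D)) (G : Fin D → Type*) [∀ i, Group (G i)] : Type _ :=
  Monoid.CoprodI G ⧸ Subgroup.normalClosure (Rels Γ G)

/-- The canonical map from a vertex group to the graph product. -/
def of (Γ : SimpleGraph (Fin D)) {G : Fin D → Type*} [∀ i, Group (G i)] (i : Fin D) :
    G i →* GP Γ G :=
  (QuotientGroup.mk' _).comp Monoid.CoprodI.of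

/-- The image in the graph product of a word in the alphabet `⊔ᵢ Gᵢ`. -/
def prodOfWord (Γ : SimpleGraph (Fin D)) {G : Fin D → Type*} [∀ i, Group (G i)]
    (u : List (Σ i, G i)) : GP Γ G :=
  (u.map fun l => of Γ l.1 l.2).prod

/-- A piling: a list of `D` strings, the `i`-th string over the alphabet
`{0} ⊔ (Gᵢ ∖ {e})`, where `none` plays the role of `0`. -/
abbrev PilingT (G : Fin D → Type*) : Type _ := ∀ i : Fin D, List (Option (G i))

/-- Replace the `i`-th string of a piling. -/
def setAt {G : Fin D → Type*} (P : PilingT G) (i : Fin D) (l : List (Option (G i))) :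
    PilingT G :=
  fun j => if h : j = i then h ▸ l else P j

/-- Append a single letter `g ∈ Gᵢ` to a piling, following Crisp–Godelle–Wiest. -/
noncomputable def appendLetter (Γ : SimpleGraph (Fin D)) {G : Fin D → Type*} [∀ i, Group (G i)]
    (P : PilingT G) (i : Fin D) (g : G i) : PilingT G :=
  match (P i).getLast? with
  | some (some g') =>
      if g' * g = 1 then
        fun j => if j = i ∨ (j ≠ i ∧ ¬ Γ.Adj i j) then (P j).dropLast else P j
      else
        setAt P i ((P i).dropLast ++ [some (g' * g)])
  | _ =>
      setAt (fun j => if j ≠ i ∧ ¬ Γ.Adj i j then P j ++ [none] else P j) i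
        (P i ++ [some g])

/-- The piling of a word in the alphabet `⊔ᵢ (Gᵢ ∖ {e})`. -/
noncomputable def pilingOfWord (Γ : SimpleGraph (Fin D)) {G : Fin D → Type*} [∀ i, Group (G i)]
    (u : List (Σ i, G i)) : PilingT G :=
  u.foldl (fun P l => appendLetter Γ P l.1 l.2) (fun _ => [])

/-- The terminal clique of a piling: vertices whose string ends in a
nontrivial group element. -/
def termClique {G : Fin D → Type*} [∀ i, Group (G i)] (P : PilingT G) : Set (Fin D) :=
  { i | ∃ g : G i, g ≠ 1 ∧ (P i).getLast? = some (some g) }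

/-- The initial clique of a piling: vertices whose string starts with a
nontrivial group element. -/
def initClique {G : Fin D → Type*} [∀ i, Group (G i)] (P : PilingT G) : Set (Fin D) :=
  { i | ∃ g : G i, g ≠ 1 ∧ (P i).head? = some (some g) }

/-- The syllable length of an element of a graph product. -/
noncomputable def syl (Γ : SimpleGraph (Fin D)) {G : Fin D → Type*} [∀ i, Group (G i)]
    (g : GP Γ G) : ℕ :=
  sInf { n | ∃ u : List (Σ i, G i), u.length = n ∧
    u.Chain' (fun a b => a.1 ≠ b.1) ∧ prodOfWord Γ u = g }

/-- One piling is a componentwise prefix of another. -/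
def PilingPrefix {G : Fin D → Type*} (P Q : PilingT G) : Prop :=
  ∀ i, (P i) <+: (Q i)

/-- The position of the sample path after `k` steps:
`Z_k = s₁w₁ ⋯ s_k w_k`. -/
def Zpath (Γ : SimpleGraph (Fin D)) {G : Fin D → Type*} [∀ i, Group (G i)]
    (s : ℕ → Σ i, G i) (w : ℕ → GP Γ G) (k : ℕ) : GP Γ G :=
  ((List.range k).map (fun m => of Γ (s m).1 (s m).2 * w m)).prod

/-- `k` is a pivotal time (`0`-indexed: this corresponds to the pivotal time `k+1`
in `1`-indexed notation) of the path `(s₁, w₁, …, sₙ, wₙ)`, with respect to the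
piling map `Π`. -/
def IsPivotal (Γ : SimpleGraph (Fin D)) {G : Fin D → Type*} [∀ i, Group (G i)]
    (Pi : GP Γ G → PilingT G) (s : ℕ → Σ i, G i) (w : ℕ → GP Γ G) (n k : ℕ) : Prop :=
  k < n ∧
  (∀ m, k < m → m ≤ n → PilingPrefix (Pi (Zpath Γ s w k * of Γ (s k).1 (s k).2))
      (Pi (Zpath Γ s w m))) ∧
  (∀ m, k < m → m < n → PilingPrefix (Pi (Zpath Γ s w k * of Γ (s k).1 (s k).2))
      (Pi (Zpath Γ s w m * of Γ (s m).1 (s m).2))) ∧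
  (s k).1 ∉ termClique (Pi (Zpath Γ s w k)) ∧
  termClique (Pi (Zpath Γ s w k * of Γ (s k).1 (s k).2)) ∩ initClique (Pi (w k)) = ∅

/-- The number of pivotal times of the path `(s₁, w₁, …, sₙ, wₙ)`. -/
noncomputable def numPivotal (Γ : SimpleGraph (Fin D)) {G : Fin D → Type*} [∀ i, Group (G i)]
    (Pi : GP Γ G → PilingT G) (s : ℕ → Σ i, G i) (w : ℕ → GP Γ G) (n : ℕ) : ℕ :=
  Set.ncard { k | IsPivotal Γ Pi s w n k }

/-- The maximum size of a clique in `Γ`. -/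
noncomputable def cliqueMax (Γ : SimpleGraph (Fin D)) : ℕ :=
  sSup { n | ∃ K : Set (Fin D), Γ.IsClique K ∧ K.ncard = n }

/-- The maximum size of the 1-neighbourhood of a clique in `Γ`. -/
noncomputable def cliqueNbhdMax (Γ : SimpleGraph (Fin D)) : ℕ :=
  sSup { n | ∃ K : Set (Fin D), Γ.IsClique K ∧
    (K ∪ { v | ∃ u ∈ K, Γ.Adj v u }).ncard = n }

/-- Word length with respect to a set `S` (and the inverses of its elements). -/
noncomputable def wordLength {H : Type*} [Group H] (S : Set H) (g : H) : ℕ :=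
  sInf { n | ∃ u : List H, u.length = n ∧ (∀ x ∈ u, x ∈ S ∨ x⁻¹ ∈ S) ∧ u.prod = g }

/-!
Count the nontrivial letters of a piling. Appending a letter adds at most one, so the piling of
`g` has at most `syl g` of them. At a pivotal time `k` the letter `s_k` is pushed onto a new
position, so `Π(Z_{k-1} s_k)` has one letter more than `Π(Z_{k-1})`, and by the prefix condition
every later `Π(Z_m)` has at least as many letters as `Π(Z_{k-1} s_k)`. Hence the letter counts
`#Π(Z_{k-1} s_k)` at pivotal times are strictly increasing and lie between `1` and `#Π(Z_n)`, so
there are at most `#Π(Z_n) ≤ syl Z_n` pivotal times.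
-/

section Piling

variable {G : Fin D → Type*}

def numLetters (P : PilingT G) : ℕ := ∑ i, (P i).countP fun x => x.isSome

/-- `termClique` ignores a string ending in `some 1`, onto which `appendLetter` would merge rather
than push; pilings of words with nontrivial letters contain no such letter. -/
def LettersNeOne [∀ i, Group (G i)] (P : PilingT G) : Prop := ∀ i, ∀ x ∈ P i, x ≠ some 1

@[simp]
theorem setAt_self (P : PilingT G) (i : Fin D) (l : List (Option (G i))) :
    setAt P i l i = l := by
  simp [setAt]

theorem setAt_of_ne (P : PilingT G) {i j : Fin D} (l : List (Option (G i))) (h : j ≠ i) :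
    setAt P i l j = P j := by
  simp [setAt, h]

theorem numLetters_le_succ_of_forall {P Q : PilingT G} (i : Fin D)
    (h : ∀ j, (Q j).countP (fun x => x.isSome) ≤
      (P j).countP (fun x => x.isSome) + if j = i then 1 else 0) :
    numLetters Q ≤ numLetters P + 1 := by
  calc numLetters Q ≤ ∑ j, ((P j).countP (fun x => x.isSome) + if j = i then 1 else 0) :=
        Finset.sum_le_sum fun j _ => h j
    _ = numLetters P + 1 := by simp [numLetters, Finset.sum_add_distrib]

theorem numLetters_mono {P Q : PilingT G} (h : PilingPrefix P Q) : numLetters P ≤ numLetters Q :=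
  Finset.sum_le_sum fun j _ => (h j).sublist.countP_le

variable (Γ : SimpleGraph (Fin D))

theorem numLetters_push (P : PilingT G) (i : Fin D) (g : G i) :
    numLetters (setAt (fun j => if j ≠ i ∧ ¬ Γ.Adj i j then P j ++ [none] else P j) i
      (P i ++ [some g])) = numLetters P + 1 := by
  have hcount (j) : (setAt (fun j => if j ≠ i ∧ ¬ Γ.Adj i j then P j ++ [none] else P j) i
      (P i ++ [some g]) j).countP (fun x => x.isSome) =
      (P j).countP (fun x => x.isSome) + if j = i then 1 else 0 := by
    by_cases hj : j = i
    · subst hj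
      simp [List.countP_append]
    · simp only [setAt_of_ne _ _ hj, hj]
      split <;> simp [List.countP_append]
  simp [numLetters, hcount, Finset.sum_add_distrib]

variable [∀ i, Group (G i)]

theorem numLetters_appendLetter_le (P : PilingT G) (i : Fin D) (g : G i) :
    numLetters (appendLetter Γ P i g) ≤ numLetters P + 1 := by
  have hdrop (j) : ((P j).dropLast.countP fun x => x.isSome) ≤ (P j).countP fun x => x.isSome :=
    (P j).dropLast_sublist.countP_le
  unfold appendLetter
  split
  · split
    · refine numLetters_le_succ_of_forall i fun j => ?_
      split <;> grind
    · refine numLetters_le_succ_of_forall i fun j => ?_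
      by_cases hj : j = i
      · subst hj
        simp only [setAt_self, List.countP_append]
        grind [List.countP_singleton]
      · simp [setAt_of_ne _ _ hj, hj]
  · exact (numLetters_push Γ P i g).le

theorem numLetters_appendLetter_of_notMem_termClique {P : PilingT G} (hP : LettersNeOne P)
    {i : Fin D} (hi : i ∉ termClique P) (g : G i) :
    numLetters (appendLetter Γ P i g) = numLetters P + 1 := by
  unfold appendLetter
  split
  · rename_i g' hlast
    exact absurd ⟨g', fun h1 => hP i _ (List.mem_of_mem_getLast? hlast) (by rw [h1]), hlast⟩ hi
  · exact numLetters_push Γ P i g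

theorem LettersNeOne.appendLetter {P : PilingT G} (hP : LettersNeOne P) {i : Fin D} {g : G i}
    (hg : g ≠ 1) : LettersNeOne (appendLetter Γ P i g) := by
  unfold GraphProductDrift.appendLetter
  split
  · split
    · intro j x hx
      dsimp only at hx
      exact hP j x (by split at hx <;> first | exact hx | exact (P j).dropLast_sublist.mem hx)
    · rename_i hne
      intro j x hx
      by_cases hj : j = i
      · subst hj
        simp only [setAt_self, List.mem_append, List.mem_singleton] at hx
        rcases hx with hx | rfl
        · exact hP j x ((P j).dropLast_sublist.mem hx)
        · simpa using hne
      · exact hP j x (by rwa [setAt_of_ne _ _ hj] at hx)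
  · intro j x hx
    by_cases hj : j = i
    · subst hj
      simp only [setAt_self, List.mem_append, List.mem_singleton] at hx
      rcases hx with hx | rfl
      · exact hP j x hx
      · simpa using hg
    · rw [setAt_of_ne _ _ hj] at hx
      split at hx
      · simp only [List.mem_append, List.mem_singleton] at hx
        rcases hx with hx | rfl
        · exact hP j x hx
        · simp
      · exact hP j x hx

theorem pilingOfWord_concat (u : List (Σ i, G i)) (a : Σ i, G i) :
    pilingOfWord Γ (u ++ [a]) = appendLetter Γ (pilingOfWord Γ u) a.1 a.2 :=
  List.foldl_append ..

theorem lettersNeOne_pilingOfWord {u : List (Σ i, G i)} (hu : ∀ l ∈ u, l.2 ≠ 1) :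
    LettersNeOne (pilingOfWord Γ u) := by
  induction u using List.reverseRecOn with
  | nil => intro _ _ hx; simp [pilingOfWord] at hx
  | append_singleton u a ih =>
    rw [pilingOfWord_concat]
    exact (ih fun l hl => hu l (by simp [hl])).appendLetter Γ (hu a (by simp))

theorem numLetters_pilingOfWord_le (u : List (Σ i, G i)) :
    numLetters (pilingOfWord Γ u) ≤ u.length := by
  induction u using List.reverseRecOn with
  | nil => simp [pilingOfWord, numLetters]
  | append_singleton u a ih =>
    rw [pilingOfWord_concat, List.length_append, List.length_singleton]
    exact (numLetters_appendLetter_le Γ _ a.1 a.2).trans (by omega)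

end Piling

section GraphProduct

variable (Γ : SimpleGraph (Fin D)) {G : Fin D → Type*} [∀ i, Group (G i)]

theorem prodOfWord_filter_ne_one (u : List (Σ i, G i)) :
    prodOfWord Γ (u.filter fun l => l.2 ≠ 1) = prodOfWord Γ u := by
  induction u with
  | nil => rfl
  | cons a u ih =>
    by_cases h : a.2 = 1 <;> simp_all [prodOfWord]

theorem exists_reduced_word (g : GP Γ G) :
    ∃ u : List (Σ i, G i), (∀ l ∈ u, l.2 ≠ 1) ∧ u.IsChain (fun a b => a.1 ≠ b.1) ∧
      prodOfWord Γ u = g := by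
  obtain ⟨x, rfl⟩ := QuotientGroup.mk'_surjective _ g
  set w := Monoid.CoprodI.Word.equiv x
  refine ⟨w.toList, w.ne_one, w.chain_ne, ?_⟩
  rw [← Monoid.CoprodI.Word.equiv.symm_apply_apply x]
  simp [prodOfWord, Monoid.CoprodI.Word.equiv, Monoid.CoprodI.Word.prod, map_list_prod,
    Function.comp_def, of, w]

def IsPilingMap (Pi : GP Γ G → PilingT G) : Prop :=
  ∀ u : List (Σ i, G i), (∀ l ∈ u, l.2 ≠ 1) → Pi (prodOfWord Γ u) = pilingOfWord Γ u

variable {Γ} {Pi : GP Γ G → PilingT G}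

theorem numLetters_le_syl
    (hPi : IsPilingMap Γ Pi)
    (g : GP Γ G) : numLetters (Pi g) ≤ syl Γ g := by
  obtain ⟨u, hlen, hu⟩ := Nat.sInf_mem (s := {m | ∃ u : List (Σ i, G i), u.length = m ∧
      u.IsChain (fun a b => a.1 ≠ b.1) ∧ prodOfWord Γ u = g}) <|
    let ⟨u, _, hu⟩ := exists_reduced_word Γ g; ⟨u.length, u, rfl, hu⟩
  set v := u.filter fun l => l.2 ≠ 1
  have hv : Pi g = pilingOfWord Γ v := by
    rw [← hu.2, ← prodOfWord_filter_ne_one,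
      hPi v fun l hl => by simpa using (List.mem_filter.mp hl).2]
  calc numLetters (Pi g) ≤ v.length := hv ▸ numLetters_pilingOfWord_le Γ v
    _ ≤ u.length := List.length_filter_le _ _
    _ = syl Γ g := hlen

theorem numLetters_mul_of_notMem_termClique
    (hPi : IsPilingMap Γ Pi)
    (g : GP Γ G) {i : Fin D} {x : G i} (hx : x ≠ 1) (hi : i ∉ termClique (Pi g)) :
    numLetters (Pi (g * of Γ i x)) = numLetters (Pi g) + 1 := by
  obtain ⟨u, hu, -, rfl⟩ := exists_reduced_word Γ g
  have hux : ∀ l ∈ u ++ [⟨i, x⟩], l.2 ≠ 1 := by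
    simpa [or_imp, forall_and] using ⟨hu, hx⟩
  have hprod : prodOfWord Γ u * of Γ i x = prodOfWord Γ (u ++ [⟨i, x⟩]) := by
    simp [prodOfWord]
  rw [hprod, hPi _ hux, pilingOfWord_concat]
  rw [hPi u hu] at hi ⊢
  exact numLetters_appendLetter_of_notMem_termClique Γ (lettersNeOne_pilingOfWord Γ hu) hi x

variable {s : ℕ → Σ i, G i} {w : ℕ → GP Γ G} {n : ℕ}

theorem IsPivotal.numLetters_eq_succ
    (hPi : IsPilingMap Γ Pi)
    (hs : ∀ k < n, (s k).2 ≠ 1) {k : ℕ} (hk : IsPivotal Γ Pi s w n k) :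
    numLetters (Pi (Zpath Γ s w k * of Γ (s k).1 (s k).2)) =
      numLetters (Pi (Zpath Γ s w k)) + 1 :=
  numLetters_mul_of_notMem_termClique hPi _ (hs k hk.1) hk.2.2.2.1

theorem strictMonoOn_numLetters_isPivotal
    (hPi : IsPilingMap Γ Pi)
    (hs : ∀ k < n, (s k).2 ≠ 1) :
    StrictMonoOn (fun k => numLetters (Pi (Zpath Γ s w k * of Γ (s k).1 (s k).2)))
      {k | IsPivotal Γ Pi s w n k} := by
  intro k hk k' hk' hlt
  calc numLetters (Pi (Zpath Γ s w k * of Γ (s k).1 (s k).2))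
      ≤ numLetters (Pi (Zpath Γ s w k')) := numLetters_mono (hk.2.1 k' hlt hk'.1.le)
    _ < numLetters (Pi (Zpath Γ s w k' * of Γ (s k').1 (s k').2)) := by
      rw [hk'.numLetters_eq_succ hPi hs]
      exact Nat.lt_succ_self _

theorem numPivotal_le_numLetters
    (hPi : IsPilingMap Γ Pi)
    (hs : ∀ k < n, (s k).2 ≠ 1) :
    numPivotal Γ Pi s w n ≤ numLetters (Pi (Zpath Γ s w n)) := by
  have hmaps : ∀ k ∈ {k | IsPivotal Γ Pi s w n k},
      numLetters (Pi (Zpath Γ s w k * of Γ (s k).1 (s k).2)) ∈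
        Set.Icc 1 (numLetters (Pi (Zpath Γ s w n))) := fun k hk =>
    ⟨(hk.numLetters_eq_succ hPi hs).symm ▸ Nat.succ_pos _,
      numLetters_mono (hk.2.1 n hk.1 le_rfl)⟩
  calc numPivotal Γ Pi s w n ≤ (Set.Icc 1 (numLetters (Pi (Zpath Γ s w n)))).ncard :=
        Set.ncard_le_ncard_of_injOn _ hmaps
          (strictMonoOn_numLetters_isPivotal hPi hs).injOn (Set.finite_Icc _ _)
    _ = numLetters (Pi (Zpath Γ s w n)) := by simp

end GraphProduct

theorem numPivotal_le_syllable_length_general {D : ℕ} (Γ : SimpleGraph (Fin D))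
    (G : Fin D → Type*) [∀ i, Group (G i)]
    (Pi : GP Γ G → PilingT G)
    (hPi : ∀ u : List (Σ i, G i), (∀ l ∈ u, l.2 ≠ 1) →
      Pi (prodOfWord Γ u) = pilingOfWord Γ u)
    (n : ℕ) (s : ℕ → Σ i, G i) (w : ℕ → GP Γ G)
    (hs : ∀ k < n, (s k).2 ≠ 1) :
    numPivotal Γ Pi s w n ≤ syl Γ (Zpath Γ s w n) :=
  (numPivotal_le_numLetters hPi hs).trans (numLetters_le_syl hPi _)

/-- The syllable length of `Zₙ = s₁w₁⋯sₙwₙ` is at least the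
number of pivotal times of the path. -/
theorem numPivotal_le_syllable_length {D : ℕ} (Γ : SimpleGraph (Fin D))
    (G : Fin D → Type*) [∀ i, Group (G i)]
    (Pi : GP Γ G → PilingT G)
    (hPi : ∀ u : List (Σ i, G i), (∀ l ∈ u, l.2 ≠ 1) →
      Pi (prodOfWord Γ u) = pilingOfWord Γ u)
    (n : ℕ) (s : ℕ → Σ i, G i) (w : ℕ → GP Γ G)
    (hs : ∀ k < n, (s k).2 ≠ 1) (hw : ∀ k < n, w k ≠ 1) :
    numPivotal Γ Pi s w n ≤ syl Γ (Zpath Γ s w n) :=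
  numPivotal_le_syllable_length_general Γ G Pi hPi n s w hs

end GraphProductDrift
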